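/- Let Φ be an n×m real matrix, L an n×n symmetric positive semidefinite matrix, H = I − (1/n)·𝟙𝟙ᵀ the centering matrix, and δ > 0. Then I + δ·Φᵀ·H·L·H·Φ is positive definite (hence invertible), and Φ·(I + δ·Φᵀ·H·L·H·Φ)⁻¹·Φᵀ = (K⁻¹ + δ·H·L·H)⁻¹ whenever K = Φ·Φᵀ is invertible. -/

import Mathlib

/-! Since `H` is symmetric, `Φᵀ H L H Φ = (H Φ)ᵀ L (H Φ)` is positive semidefinite, so adding the
identity gives a positive definite matrix. With `K = Φ Φᵀ` and `S = δ H L H`, the push-through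
identity `(K⁻¹ + S) Φ = K⁻¹ Φ (1 + Φᵀ S Φ)` multiplied on the right by `(1 + Φᵀ S Φ)⁻¹ Φᵀ`
shows that `Φ (1 + Φᵀ S Φ)⁻¹ Φᵀ` is a right inverse of `K⁻¹ + S`. -/

open Matrix

namespace Matrix

variable {R ι κ : Type*} [CommRing R] [Fintype ι] [DecidableEq ι] [Fintype κ] [DecidableEq κ]

theorem mul_inv_one_add_mul_mul_eq_inv_inv_add (Φ : Matrix ι κ R) (Ψ : Matrix κ ι R)
    (S : Matrix ι ι R) (hK : IsUnit (Φ * Ψ).det) (hA : IsUnit (1 + Ψ * S * Φ).det) :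
    Φ * (1 + Ψ * S * Φ)⁻¹ * Ψ = ((Φ * Ψ)⁻¹ + S)⁻¹ := by
  set K := Φ * Ψ
  set A := 1 + Ψ * S * Φ
  have push : (K⁻¹ + S) * Φ = K⁻¹ * (Φ * A) := by
    rw [Matrix.mul_add, Matrix.mul_one, Matrix.mul_add, ← Matrix.mul_assoc K⁻¹ Φ,
      ← Matrix.mul_assoc, ← Matrix.mul_assoc, Matrix.mul_assoc K⁻¹ Φ Ψ,
      nonsing_inv_mul K hK, Matrix.one_mul, Matrix.add_mul]
  symm
  refine inv_eq_right_inv ?_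
  calc (K⁻¹ + S) * (Φ * A⁻¹ * Ψ) = K⁻¹ * Φ * (A * A⁻¹) * Ψ := by
        simp only [← Matrix.mul_assoc, push]
    _ = 1 := by rw [mul_nonsing_inv A hA, Matrix.mul_one, Matrix.mul_assoc, nonsing_inv_mul K hK]

end Matrix

theorem isHermitian_one_sub_smul_of_one {ι : Type*} [Fintype ι] [DecidableEq ι] (c : ℝ) :
    (1 - c • Matrix.of fun _ _ : ι => (1 : ℝ)).IsHermitian := by
  refine isHermitian_one.sub (IsHermitian.smul ?_ (IsSelfAdjoint.all c))
  ext i j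
  rfl

theorem stmt_1 {n m : ℕ} (Φ : Matrix (Fin n) (Fin m) ℝ)
    (L : Matrix (Fin n) (Fin n) ℝ) (hL : L.PosSemidef)
    (H : Matrix (Fin n) (Fin n) ℝ)
    (hH : H = 1 - ((n : ℝ)⁻¹) • Matrix.of (fun _ _ => (1 : ℝ)))
    (δ : ℝ) (hδ : 0 < δ) :
    ((1 : Matrix (Fin m) (Fin m) ℝ) + δ • (Φᵀ * H * L * H * Φ)).PosDef ∧
      (IsUnit (Φ * Φᵀ).det →
        Φ * ((1 : Matrix (Fin m) (Fin m) ℝ) + δ • (Φᵀ * H * L * H * Φ))⁻¹ * Φᵀ =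
          ((Φ * Φᵀ)⁻¹ + δ • (H * L * H))⁻¹) := by
  have hHerm : Hᴴ = H := hH ▸ isHermitian_one_sub_smul_of_one _
  have hgram : Φᵀ * H * L * H * Φ = (H * Φ)ᴴ * L * (H * Φ) := by
    rw [conjTranspose_mul, hHerm, conjTranspose_eq_transpose_of_trivial]
    simp only [Matrix.mul_assoc]
  have hApd : ((1 : Matrix (Fin m) (Fin m) ℝ) + δ • (Φᵀ * H * L * H * Φ)).PosDef :=
    PosDef.one.add_posSemidef (hgram ▸ hL.conjTranspose_mul_mul_same (H * Φ) |>.smul hδ.le)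
  refine ⟨hApd, fun hK => ?_⟩
  have hfactor : δ • (Φᵀ * H * L * H * Φ) = Φᵀ * (δ • (H * L * H)) * Φ := by
    simp only [Matrix.mul_smul, Matrix.smul_mul, Matrix.mul_assoc]
  rw [hfactor] at hApd ⊢
  exact mul_inv_one_add_mul_mul_eq_inv_inv_add Φ Φᵀ _ hK
    ((isUnit_iff_isUnit_det _).mp hApd.isUnit)
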